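/- There exist three pairwise disjoint subsets A, B and C of ℂ such that ℂ = A ∪ B ∪ C and none of A, B, C is fractionally dense in ℂ, i.e. none of the quotient sets R(A), R(B), R(C) is dense in ℂ. -/

import Mathlib

/-!
Call `S` the closed sector `|arg z| ≤ π / 3`. A quotient of two points of `S` has argument in
`[-2π/3, 2π/3]`, so it stays in a closed set avoiding `-1`, and the quotient set of `S` is not
dense. Quotient sets are unchanged by rotation, and `S`, `ω S`, `ω² S` cover `ℂ` for a primitive
cube root of unity `ω`; carving a partition out of these three sectors gives the theorem.
-/

open ComplexConjugate Pointwise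

def quotientSet {K : Type*} [DivisionRing K] (S : Set K) : Set K :=
  {z | ∃ x ∈ S, ∃ y ∈ S, y ≠ 0 ∧ z = x / y}

section QuotientSet

variable {K : Type*}

theorem quotientSet_mono [DivisionRing K] {S T : Set K} (h : S ⊆ T) :
    quotientSet S ⊆ quotientSet T := by
  rintro _ ⟨x, hx, y, hy, hy0, rfl⟩
  exact ⟨x, h hx, y, h hy, hy0, rfl⟩

theorem quotientSet_smul [Field K] {c : K} (hc : c ≠ 0) (S : Set K) :
    quotientSet (c • S) = quotientSet S := by
  ext z
  constructor
  · rintro ⟨_, ⟨x, hx, rfl⟩, _, ⟨y, hy, rfl⟩, hy0, rfl⟩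
    exact ⟨x, hx, y, hy, right_ne_zero_of_mul hy0, mul_div_mul_left x y hc⟩
  · rintro ⟨x, hx, y, hy, hy0, rfl⟩
    exact ⟨c * x, Set.smul_mem_smul_set hx, c * y, Set.smul_mem_smul_set hy,
      mul_ne_zero hc hy0, (mul_div_mul_left x y hc).symm⟩

end QuotientSet

namespace Complex

/-- The closed sector `|arg z| ≤ π / 3`. -/
def sector : Set ℂ := {z | ‖z‖ ≤ 2 * z.re}

theorem sq_im_le_of_mem_sector {z : ℂ} (hz : z ∈ sector) : 4 * z.im ^ 2 ≤ 3 * ‖z‖ ^ 2 := by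
  have hz' : ‖z‖ ≤ 2 * z.re := hz
  nlinarith [sq_norm_sub_sq_re z, norm_nonneg z]

theorem neg_norm_mul_norm_le_two_mul_re_mul_conj {x y : ℂ} (hx : x ∈ sector)
    (hy : y ∈ sector) : -(‖x‖ * ‖y‖) ≤ 2 * (x * conj y).re := by
  have hre : ‖x‖ * ‖y‖ ≤ 2 * x.re * (2 * y.re) :=
    mul_le_mul hx hy (norm_nonneg y) ((norm_nonneg x).trans hx)
  have him_sq : (4 * (x.im * y.im)) ^ 2 ≤ (3 * (‖x‖ * ‖y‖)) ^ 2 := by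
    have := mul_le_mul (sq_im_le_of_mem_sector hx) (sq_im_le_of_mem_sector hy)
      (by positivity) (by positivity)
    nlinarith
  have him : -(3 * (‖x‖ * ‖y‖)) ≤ 4 * (x.im * y.im) :=
    (abs_le_of_sq_le_sq' him_sq (by positivity)).1
  simp only [mul_re, conj_re, conj_im]
  linarith

theorem quotientSet_sector_subset : quotientSet sector ⊆ {w : ℂ | -‖w‖ ≤ 2 * w.re} := by
  rintro _ ⟨x, hx, y, hy, hy0, rfl⟩
  have hy2 : 0 < ‖y‖ ^ 2 := by positivity
  have hre : (x / y).re = (x * conj y).re / ‖y‖ ^ 2 := by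
    rw [div_re, ← normSq_eq_norm_sq]
    simp only [mul_re, conj_re, conj_im]
    ring
  have hnorm : ‖x / y‖ = ‖x‖ * ‖y‖ / ‖y‖ ^ 2 := by
    rw [norm_div]
    field_simp
  change -‖x / y‖ ≤ 2 * (x / y).re
  rw [hre, hnorm, mul_div_assoc', neg_div']
  exact div_le_div_of_nonneg_right (neg_norm_mul_norm_le_two_mul_re_mul_conj hx hy) hy2.le

theorem not_dense_quotientSet_sector : ¬ Dense (quotientSet sector) := fun h => by
  have hclosed : IsClosed {w : ℂ | -‖w‖ ≤ 2 * w.re} := isClosed_le (by fun_prop) (by fun_prop)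
  have := hclosed.closure_subset_iff.2 quotientSet_sector_subset (h.closure_eq ▸ Set.mem_univ (-1))
  norm_num at this

theorem not_dense_quotientSet_of_subset_smul_sector {S : Set ℂ} {u : ℂ} (hu : u ≠ 0)
    (hS : S ⊆ u • sector) : ¬ Dense (quotientSet S) := fun h =>
  not_dense_quotientSet_sector (quotientSet_smul hu sector ▸ h.mono (quotientSet_mono hS))

theorem mem_smul_sector_iff {u z : ℂ} (hu : ‖u‖ = 1) :
    z ∈ u • sector ↔ ‖z‖ ≤ 2 * (conj u * z).re := by
  have hu0 : u ≠ 0 := norm_ne_zero_iff.1 (by rw [hu]; norm_num)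
  rw [Set.mem_smul_set_iff_inv_smul_mem₀ hu0, smul_eq_mul, inv_def, normSq_eq_norm_sq, hu]
  simp [sector, hu]

noncomputable def cubeRootOfUnity : ℂ := ⟨-1 / 2, √3 / 2⟩

theorem norm_cubeRootOfUnity : ‖cubeRootOfUnity‖ = 1 := by
  rw [norm_eq_sqrt_sq_add_sq, cubeRootOfUnity]
  norm_num [div_pow]

theorem sector_union_smul_sector_union_smul_sector :
    sector ∪ cubeRootOfUnity • sector ∪ conj cubeRootOfUnity • sector = Set.univ := by
  refine Set.eq_univ_of_forall fun z => ?_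
  simp only [Set.mem_union, mem_smul_sector_iff norm_cubeRootOfUnity,
    mem_smul_sector_iff ((norm_conj _).trans norm_cubeRootOfUnity), conj_conj]
  simp only [sector, cubeRootOfUnity, Set.mem_ofPred_eq, mul_re, conj_re, conj_im]
  by_contra! h
  obtain ⟨⟨h1, h2⟩, h3⟩ := h
  -- The three projections sum to `0` and their squares to `3/2 ‖z‖²`, so the three
  -- positive products below sum to `0`.
  nlinarith [sq_norm_sub_sq_re z, Real.sq_sqrt (show (0 : ℝ) ≤ 3 by norm_num),
    mul_pos (sub_pos.2 h1) (by linarith : (0 : ℝ) < ‖z‖ + z.re),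
    mul_pos (sub_pos.2 h2) (by linarith : (0 : ℝ) < ‖z‖ - z.re / 2 + √3 / 2 * z.im),
    mul_pos (sub_pos.2 h3) (by linarith : (0 : ℝ) < ‖z‖ - z.re / 2 - √3 / 2 * z.im)]

end Complex

open Complex in
/-- There is a three-partition `ℂ = A ∪ B ∪ C` into pairwise disjoint sets,
none of which is fractionally dense in `ℂ`. -/
theorem stmt_14 :
    ∃ A B C : Set ℂ,
      A ∪ B ∪ C = Set.univ ∧ Disjoint A B ∧ Disjoint B C ∧ Disjoint A C ∧
      ¬ Dense {z : ℂ | ∃ x ∈ A, ∃ y ∈ A, y ≠ 0 ∧ z = x / y} ∧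
      ¬ Dense {z : ℂ | ∃ x ∈ B, ∃ y ∈ B, y ≠ 0 ∧ z = x / y} ∧
      ¬ Dense {z : ℂ | ∃ x ∈ C, ∃ y ∈ C, y ≠ 0 ∧ z = x / y} := by
  have hω : cubeRootOfUnity ≠ 0 := norm_ne_zero_iff.1 (by rw [norm_cubeRootOfUnity]; norm_num)
  have hC : (sector ∪ cubeRootOfUnity • sector)ᶜ ⊆ conj cubeRootOfUnity • sector := fun z hz =>
    (sector_union_smul_sector_union_smul_sector ▸ Set.mem_univ z).resolve_left hz
  refine ⟨sector, cubeRootOfUnity • sector \ sector, (sector ∪ cubeRootOfUnity • sector)ᶜ,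
    by rw [Set.union_sdiff_self, Set.union_compl_self], Set.disjoint_sdiff_right,
    disjoint_compl_right.mono_left (Set.sdiff_subset.trans Set.subset_union_right),
    disjoint_compl_right.mono_left Set.subset_union_left, not_dense_quotientSet_sector,
    not_dense_quotientSet_of_subset_smul_sector hω Set.sdiff_subset,
    not_dense_quotientSet_of_subset_smul_sector (by simpa using hω) hC⟩
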